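/- Let ψ be the perspective penalty with parameters λ0, λ2 > 0 and M > 0, and define c = 2√(λ0λ2) if √(λ0/λ2) ≤ M, and c = λ0/M + λ2M otherwise. Then for any t ∈ ℝ, 0 is a minimizer of θ ↦ (1/2)(θ - t)² + ψ(θ) if and only if |t| ≤ c. -/
import Mathlib


noncomputable def psiP (l0 l2 M θ : ℝ) : EReal :=
  if M < |θ| then ⊤
  else if Real.sqrt (l0 / l2) ≤ M then
    (if |θ| ≤ Real.sqrt (l0 / l2) then ((2 * Real.sqrt (l0 * l2) * |θ| : ℝ) : EReal)
     else ((l0 + l2 * θ^2 : ℝ) : EReal))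
  else (((l0 / M + l2 * M) * |θ| : ℝ) : EReal)

theorem stmt8 (l0 l2 M : ℝ) (h0 : 0 < l0) (h2 : 0 < l2) (hM : 0 < M) (t : ℝ) :
    let c : ℝ := if Real.sqrt (l0 / l2) ≤ M then 2 * Real.sqrt (l0 * l2) else l0 / M + l2 * M
    ((∀ y : ℝ,
        (((1:ℝ)/2 * ((0:ℝ) - t)^2 : ℝ) : EReal) + psiP l0 l2 M 0
          ≤ (((1:ℝ)/2 * (y - t)^2 : ℝ) : EReal) + psiP l0 l2 M y)
      ↔ |t| ≤ c) := by
  intro c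
  have hcc : c = if Real.sqrt (l0 / l2) ≤ M then 2 * Real.sqrt (l0 * l2)
      else l0 / M + l2 * M := rfl
  have hspos : 0 < Real.sqrt (l0 / l2) := Real.sqrt_pos.mpr (div_pos h0 h2)
  have hcpos : 0 < c := by
    rw [hcc]; split
    · have : 0 < Real.sqrt (l0 * l2) := Real.sqrt_pos.mpr (mul_pos h0 h2)
      linarith
    · positivity
  have hψ0 : psiP l0 l2 M 0 = ((0 : ℝ) : EReal) := by
    unfold psiP
    rw [abs_zero, if_neg (not_lt.mpr hM.le)]
    split
    · rw [if_pos (Real.sqrt_nonneg _)]; norm_num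
    · norm_num
  have hsmall : ∀ y : ℝ, |y| ≤ min (Real.sqrt (l0 / l2)) M →
      psiP l0 l2 M y = ((c * |y| : ℝ) : EReal) := by
    intro y hy
    unfold psiP
    rw [if_neg (not_lt.mpr (hy.trans (min_le_right _ _)))]
    have h2' : |y| ≤ Real.sqrt (l0 / l2) := hy.trans (min_le_left _ _)
    rw [hcc]
    by_cases hsM : Real.sqrt (l0 / l2) ≤ M
    · rw [if_pos hsM, if_pos h2', if_pos hsM]
    · rw [if_neg hsM, if_neg hsM]
  constructor
  · intro h
    by_contra hct
    push_neg at hct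
    set ε := min (min (Real.sqrt (l0 / l2)) M) (|t| - c) with hε
    have hεd : ε ≤ min (Real.sqrt (l0 / l2)) M := min_le_left _ _
    have hεt : ε ≤ |t| - c := min_le_right _ _
    have hεpos : 0 < ε := lt_min (lt_min hspos hM) (by linarith)
    set y : ℝ := if 0 ≤ t then ε else -ε with hy
    have hyabs : |y| = ε := by
      rw [hy]; split
      · exact abs_of_pos hεpos
      · rw [abs_neg]; exact abs_of_pos hεpos
    have hty : t * y = |t| * ε := by
      rw [hy]; split
      · rw [abs_of_nonneg ‹0 ≤ t›]
      · rw [abs_of_neg (lt_of_not_ge ‹¬ 0 ≤ t›)]; ring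
    have hy2 : y ^ 2 = ε ^ 2 := by rw [← sq_abs, hyabs]
    have := h y
    rw [hψ0, hsmall y (hyabs ▸ hεd), EReal.coe_zero, add_zero, ← EReal.coe_add,
      EReal.coe_le_coe_iff, hyabs] at this
    nlinarith [hεpos, hεt, hct]
  · intro hct y
    by_cases hMy : M < |y|
    · have htop : psiP l0 l2 M y = ⊤ := by unfold psiP; rw [if_pos hMy]
      rw [htop, EReal.coe_add_top]
      exact le_top
    · push_neg at hMy
      have hty : t * y ≤ c * |y| := by
        calc t * y ≤ |t * y| := le_abs_self _
          _ = |t| * |y| := abs_mul _ _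
          _ ≤ c * |y| := mul_le_mul_of_nonneg_right hct (abs_nonneg y)
      rw [hψ0, EReal.coe_zero, add_zero]
      unfold psiP
      rw [if_neg (not_lt.mpr hMy)]
      by_cases hsM : Real.sqrt (l0 / l2) ≤ M
      · have hc2 : c = 2 * Real.sqrt (l0 * l2) := by rw [hcc, if_pos hsM]
        rw [if_pos hsM]
        by_cases hys : |y| ≤ Real.sqrt (l0 / l2)
        · rw [if_pos hys, ← EReal.coe_add, EReal.coe_le_coe_iff]
          rw [hc2] at hty
          nlinarith [sq_nonneg y, sq_abs y]
        · rw [if_neg hys, ← EReal.coe_add, EReal.coe_le_coe_iff]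
          have hamgm : 2 * Real.sqrt (l0 * l2) * |y| ≤ l0 + l2 * y ^ 2 := by
            have h1 : Real.sqrt (l0 * l2) = Real.sqrt l0 * Real.sqrt l2 :=
              Real.sqrt_mul h0.le _
            nlinarith [sq_nonneg (Real.sqrt l0 - Real.sqrt l2 * |y|),
              Real.sq_sqrt h0.le, Real.sq_sqrt h2.le, sq_abs y]
          rw [hc2] at hty
          nlinarith [sq_nonneg y, sq_abs y]
      · have hc2 : c = l0 / M + l2 * M := by rw [hcc, if_neg hsM]
        rw [if_neg hsM, ← EReal.coe_add, EReal.coe_le_coe_iff]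
        rw [hc2] at hty
        nlinarith [sq_nonneg y, sq_abs y]
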